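/- Let p be a prime and write n = pm + r with 0 ≤ r < p. Let C_p(n) be the number of words over {1,2} of rank n whose f-value is coprime to p. Then C_p(n) = C_p(p)^m · C_p(r). -/

import Mathlib

/-- The list of words covered by `w` in the Young-Fibonacci lattice. -/
def preds : List ℕ → List (List ℕ)
  | [] => []
  | 1 :: t => [t]
  | 2 :: t => (1 :: t) :: (preds t).map (fun u => 2 :: u)
  | _ :: _ => []

theorem preds_sum_lt : ∀ (w u : List ℕ), u ∈ preds w → u.sum < w.sum := by
  intro w
  induction w using preds.induct with
  | case1 => intro u h; simp [preds] at h
  | case2 t => intro u h; simp [preds] at h; subst h; simp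
  | case3 t ih =>
      intro u h
      simp [preds] at h
      rcases h with h | ⟨v, hv, rfl⟩
      · subst h; simp
      · have := ih v hv; simpa using by omega
  | case4 x t h1 h2 => intro u h; simp [preds] at h

/-- The number of saturated chains from the empty word to `w`. -/
def f (w : List ℕ) : ℕ :=
  if w = [] then 1
  else ((preds w).attach.map (fun u => f u.1)).sum
termination_by w.sum
decreasing_by exact preds_sum_lt w u.1 u.2

/-- The product formula. -/
def fprod (w : List ℕ) : ℕ :=
  ∏ i ∈ Finset.univ.filter (fun i : Fin w.length => w.get i = 2), ((w.drop i.1).sum - 1)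

/-!
If `v` has rank `p`, then `fprod (u ++ v) ≡ fprod u * fprod v [MOD p]`, since appending `v` raises
each factor coming from `u` by `p`; so `u ++ v` is counted by `C_p` iff both `u` and `v` are.
Conversely a counted word of rank `≥ p` always has a suffix of rank exactly `p`, because suffix
sums grow in steps of `1` or `2`, and a step of `2` jumping over `p` would put the factor `p` into
`fprod`. Cutting off this suffix is a bijection between counted words of rank `k + p` and pairs of
counted words of ranks `k` and `p`; induction on `m` finishes.
-/

lemma fprod_nil : fprod [] = 1 := by simp [fprod]

lemma fprod_cons (a : ℕ) (t : List ℕ) :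
    fprod (a :: t) = (if a = 2 then a + t.sum - 1 else 1) * fprod t := by
  unfold fprod
  rw [Finset.prod_filter, Finset.prod_filter]
  refine (Fin.prod_univ_succ fun i : Fin (t.length + 1) =>
    if (a :: t).get i = 2 then ((a :: t).drop i.1).sum - 1 else 1).trans ?_
  simp

lemma fprod_append_modEq (u v : List ℕ) : fprod (u ++ v) ≡ fprod u * fprod v [MOD v.sum] := by
  induction u with
  | nil => simp [fprod_nil, Nat.ModEq.refl]
  | cons a u ih =>
    have hfactor : (if a = 2 then a + (u ++ v).sum - 1 else 1)
        ≡ (if a = 2 then a + u.sum - 1 else 1) [MOD v.sum] := by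
      split_ifs with ha
      · rw [List.sum_append, show a + (u.sum + v.sum) - 1 = a + u.sum - 1 + v.sum by omega]
        exact Nat.add_modEq_right
      · rfl
    simpa only [List.cons_append, fprod_cons, mul_assoc] using hfactor.mul ih

lemma coprime_fprod_append_iff {p : ℕ} {u v : List ℕ} (hv : v.sum = p) :
    (fprod (u ++ v)).Coprime p ↔ (fprod u).Coprime p ∧ (fprod v).Coprime p := by
  have hmod := fprod_append_modEq u v
  rw [hv] at hmod
  rw [← Nat.coprime_mul_iff_left, Nat.Coprime, Nat.Coprime, hmod.gcd_eq]

lemma List.eq_nil_of_sum_eq_zero {l : List ℕ} (hpos : ∀ x ∈ l, x ≠ 0) (hl : l.sum = 0) :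
    l = [] :=
  List.eq_nil_iff_forall_not_mem.2 fun x hx => hpos x hx (List.sum_eq_zero_iff.1 hl x hx)

lemma List.append_inj_of_sum_eq {u v u' v' : List ℕ} (h : u ++ v = u' ++ v')
    (hv : ∀ x ∈ v, x ≠ 0) (hv' : ∀ x ∈ v', x ≠ 0) (hsum : v.sum = v'.sum) :
    u = u' ∧ v = v' := by
  rcases List.append_eq_append_iff.1 h with ⟨s, rfl, rfl⟩ | ⟨s, rfl, rfl⟩
  · have hs : s = [] := List.eq_nil_of_sum_eq_zero (fun x hx => hv x (by simp [hx]))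
      (by simp only [List.sum_append] at hsum; omega)
    simp [hs]
  · have hs : s = [] := List.eq_nil_of_sum_eq_zero (fun x hx => hv' x (by simp [hx]))
      (by simp only [List.sum_append] at hsum; omega)
    simp [hs]

lemma exists_append_sum_eq {p : ℕ} (hp : p ≠ 1) {w : List ℕ} (hw : ∀ x ∈ w, x = 1 ∨ x = 2)
    (hsum : p ≤ w.sum) (hcop : (fprod w).Coprime p) : ∃ u v, w = u ++ v ∧ v.sum = p := by
  induction w with
  | nil => exact ⟨[], [], rfl, by simp_all⟩
  | cons a t ih =>
    rw [List.forall_mem_cons] at hw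
    rw [fprod_cons] at hcop
    rw [List.sum_cons] at hsum
    obtain heq | hlt := hsum.eq_or_lt
    · exact ⟨[], a :: t, rfl, by simp [heq]⟩
    obtain htail | htail := le_or_gt p t.sum
    · obtain ⟨u, v, rfl, hv⟩ := ih hw.2 htail (Nat.Coprime.coprime_mul_left hcop)
      exact ⟨a :: u, v, rfl, hv⟩
    · have ha : a = 2 := by omega
      have hfactor : a + t.sum - 1 = p := by omega
      rw [if_pos ha, hfactor] at hcop
      exact absurd ((Nat.coprime_self p).1 (Nat.Coprime.coprime_mul_right hcop)) hp

def coprimeWords (p n : ℕ) : Set (List ℕ) :=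
  {w | (∀ x ∈ w, x = 1 ∨ x = 2) ∧ w.sum = n ∧ (fprod w).Coprime p}

lemma append_mem_coprimeWords_iff {p k : ℕ} {u v : List ℕ} (hv : v.sum = p) :
    u ++ v ∈ coprimeWords p (k + p) ↔ u ∈ coprimeWords p k ∧ v ∈ coprimeWords p p := by
  simp only [coprimeWords, Set.mem_ofPred_eq, List.forall_mem_append, List.sum_append,
    coprime_fprod_append_iff hv, hv, add_left_inj, true_and]
  tauto

def appendCoprimeWords (p k : ℕ) :
    coprimeWords p k × coprimeWords p p → coprimeWords p (k + p) :=
  fun x => ⟨x.1.1 ++ x.2.1, (append_mem_coprimeWords_iff x.2.2.2.1).2 ⟨x.1.2, x.2.2⟩⟩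

lemma appendCoprimeWords_injective (p k : ℕ) : (appendCoprimeWords p k).Injective := by
  rintro ⟨⟨u, hu⟩, ⟨v, hv⟩⟩ ⟨⟨u', hu'⟩, ⟨v', hv'⟩⟩ h
  have hpos {w : List ℕ} (hw : ∀ x ∈ w, x = 1 ∨ x = 2) : ∀ x ∈ w, x ≠ 0 := fun x hx => by
    rcases hw x hx with rfl | rfl <;> decide
  obtain ⟨rfl, rfl⟩ := List.append_inj_of_sum_eq (Subtype.ext_iff.1 h) (hpos hv.1) (hpos hv'.1)
    (hv.2.1.trans hv'.2.1.symm)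
  rfl

lemma appendCoprimeWords_surjective {p : ℕ} (hp : p ≠ 1) (k : ℕ) :
    (appendCoprimeWords p k).Surjective := by
  rintro ⟨w, hw⟩
  obtain ⟨u, v, rfl, hv⟩ := exists_append_sum_eq hp hw.1 (hw.2.1 ▸ Nat.le_add_left p k) hw.2.2
  obtain ⟨hu, hv'⟩ := (append_mem_coprimeWords_iff hv).1 hw
  exact ⟨(⟨u, hu⟩, ⟨v, hv'⟩), rfl⟩

lemma card_coprimeWords_add {p : ℕ} (hp : p ≠ 1) (k : ℕ) :
    Nat.card (coprimeWords p (k + p)) =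
      Nat.card (coprimeWords p k) * Nat.card (coprimeWords p p) := by
  rw [← Nat.card_prod]
  exact (Nat.card_congr (Equiv.ofBijective _
    ⟨appendCoprimeWords_injective p k, appendCoprimeWords_surjective hp k⟩)).symm

lemma card_coprimeWords_mul_add {p : ℕ} (hp : p ≠ 1) (m r : ℕ) :
    Nat.card (coprimeWords p (p * m + r)) =
      Nat.card (coprimeWords p p) ^ m * Nat.card (coprimeWords p r) := by
  induction m with
  | zero => simp
  | succ m ih =>
    rw [show p * (m + 1) + r = p * m + r + p by ring, card_coprimeWords_add hp, ih]
    ring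

lemma Finset.card_eq_card_coprimeWords {p n : ℕ} {A : Finset (List ℕ)}
    (hA : ∀ w, w ∈ A ↔ w ∈ coprimeWords p n) : A.card = Nat.card (coprimeWords p n) := by
  rw [← Nat.card_eq_finsetCard]
  exact Nat.card_congr (Equiv.subtypeEquivRight hA)

theorem coprime_count_multiplicative_general (p : ℕ) (hp : p.Prime) (n m r : ℕ)
    (hn : n = p * m + r) (A B C : Finset (List ℕ))
    (hA : ∀ w : List ℕ, w ∈ A ↔ (∀ x ∈ w, x = 1 ∨ x = 2) ∧ w.sum = n ∧ Nat.Coprime (fprod w) p)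
    (hB : ∀ w : List ℕ, w ∈ B ↔ (∀ x ∈ w, x = 1 ∨ x = 2) ∧ w.sum = p ∧ Nat.Coprime (fprod w) p)
    (hC : ∀ w : List ℕ, w ∈ C ↔ (∀ x ∈ w, x = 1 ∨ x = 2) ∧ w.sum = r ∧ Nat.Coprime (fprod w) p) :
    A.card = B.card ^ m * C.card := by
  rw [Finset.card_eq_card_coprimeWords hA, Finset.card_eq_card_coprimeWords hB,
    Finset.card_eq_card_coprimeWords hC, hn]
  exact card_coprimeWords_mul_add hp.ne_one m r

/-- writing `n = p·m + r` with `0 ≤ r < p`, the number `C_p(n)` of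
words of rank `n` with `f`-value coprime to `p` satisfies `C_p(n) = C_p(p)^m · C_p(r)`. -/
theorem coprime_count_multiplicative (p : ℕ) (hp : p.Prime) (n m r : ℕ)
    (hn : n = p * m + r) (hr : r < p) (A B C : Finset (List ℕ))
    (hA : ∀ w : List ℕ, w ∈ A ↔ (∀ x ∈ w, x = 1 ∨ x = 2) ∧ w.sum = n ∧ Nat.Coprime (fprod w) p)
    (hB : ∀ w : List ℕ, w ∈ B ↔ (∀ x ∈ w, x = 1 ∨ x = 2) ∧ w.sum = p ∧ Nat.Coprime (fprod w) p)
    (hC : ∀ w : List ℕ, w ∈ C ↔ (∀ x ∈ w, x = 1 ∨ x = 2) ∧ w.sum = r ∧ Nat.Coprime (fprod w) p) :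
    A.card = B.card ^ m * C.card :=
  coprime_count_multiplicative_general p hp n m r hn A B C hA hB hC
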